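/- Let g : ℝ → ℝ be differentiable with L-Lipschitz derivative (L > 0), let a ∈ [0,1], and define d' = Proj_{[0,1]}(a - g'(a)/L) - a. Then g(a + d') ≤ g(a) - (L/2)·(d')², and moreover g(a + d') ≤ g(a) - (1/(2L))·(Proj_{[0,1]}(a - g'(a)) - a)² whenever L ≥ 1. -/

import Mathlib

/-!
The descent lemma bounds `g (a + d)` by `g a + g' a * d + L/2 * d²`. For the projected step `d`,
the variational inequality of the projection onto `[0, 1]` gives `g' a * d ≤ -L d²`, hence the
first bound. For the second, clamping the longer step `-g' a = L * (-g' a / L)` moves `a` at most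
`L` times as far, which turns the first bound into the second.
-/

open Set

/-- Along the segment `t ↦ a + t d`, the gap between `g` and its quadratic upper model has
derivative `(g' (a + t d) - g' a) d - L d² t ≤ 0`, so it can only decrease from `t = 0` to `t = 1`. -/
theorem descent_lemma (g g' : ℝ → ℝ) (L : ℝ)
    (hderiv : ∀ x, HasDerivAt g (g' x) x)
    (hlip : ∀ x y, |g' x - g' y| ≤ L * |x - y|)
    (a d : ℝ) : g (a + d) ≤ g a + g' a * d + L / 2 * d ^ 2 := by
  set φ : ℝ → ℝ := fun t => g (a + t * d) - g' a * d * t - L / 2 * d ^ 2 * t ^ 2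
  have hφ : ∀ t, HasDerivAt φ (g' (a + t * d) * d - g' a * d - L * d ^ 2 * t) t := by
    intro t
    have hline : HasDerivAt (fun t : ℝ => a + t * d) d t := by
      simpa using ((hasDerivAt_id t).mul_const d).const_add a
    have hφ' : HasDerivAt φ _ t := (((hderiv _).comp t hline).sub
      ((hasDerivAt_id t).const_mul (g' a * d))).sub ((hasDerivAt_pow 2 t).const_mul (L / 2 * d ^ 2))
    convert hφ' using 1
    ring
  have hderiv_nonpos : ∀ t ∈ interior (Icc (0 : ℝ) 1), deriv φ t ≤ 0 := by
    intro t ht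
    rw [interior_Icc] at ht
    rw [(hφ t).deriv]
    have hgap : (g' (a + t * d) - g' a) * d ≤ L * (t * d ^ 2) :=
      calc (g' (a + t * d) - g' a) * d ≤ |g' (a + t * d) - g' a| * |d| := by
            rw [← abs_mul]; exact le_abs_self _
        _ ≤ L * |a + t * d - a| * |d| := by gcongr; exact hlip _ _
        _ = L * (t * d ^ 2) := by
            rw [add_sub_cancel_left, abs_mul, abs_of_pos ht.1, ← sq_abs d]; ring
    linarith
  have hanti : AntitoneOn φ (Icc 0 1) :=
    antitoneOn_of_deriv_nonpos (convex_Icc 0 1)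
      (fun t _ => (hφ t).continuousAt.continuousWithinAt)
      (fun t _ => (hφ t).differentiableAt.differentiableWithinAt) hderiv_nonpos
  have h01 := hanti (left_mem_Icc.2 zero_le_one) (right_mem_Icc.2 zero_le_one) zero_le_one
  norm_num [φ] at h01
  linarith

theorem clamp_variational_ineq {l u x y : ℝ} (hy : y ∈ Icc l u) :
    (x - min (max x l) u) * (y - min (max x l) u) ≤ 0 := by
  obtain ⟨hly, hyu⟩ := hy
  simp only [min_def, max_def]
  split_ifs <;> nlinarith

theorem abs_clamp_sub_clamp_le (l u x y : ℝ) :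
    |min (max x l) u - min (max y l) u| ≤ |x - y| :=
  calc |min (max x l) u - min (max y l) u| ≤ max |max x l - max y l| |u - u| :=
        abs_min_sub_min_le_max _ _ _ _
    _ = |max x l - max y l| := by simp
    _ ≤ |x - y| := abs_max_sub_max_le_abs _ _ _

/-- Clamping a longer step `s w` (with `s ≥ 1`) moves `a` at most `s` times as far as clamping `w`:
either `a + w` is not clamped and clamping is 1-Lipschitz, or it is, and so is `a + s w`,
to the same endpoint. -/
theorem abs_clamp_add_smul_sub_le {l u a s w : ℝ} (ha : a ∈ Icc l u) (hs : 1 ≤ s) :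
    |min (max (a + s * w) l) u - a| ≤ s * |min (max (a + w) l) u - a| := by
  obtain ⟨hla, hau⟩ := ha
  have hlu := hla.trans hau
  have hs0 : (0 : ℝ) ≤ s := zero_le_one.trans hs
  rcases le_or_gt (a + w) l with hlow | hlow
  · have hsw : a + s * w ≤ l := by nlinarith
    rw [max_eq_right hsw, max_eq_right hlow, min_eq_left hlu, abs_of_nonpos (sub_nonpos.2 hla)]
    nlinarith
  rcases le_or_gt u (a + w) with hup | hup
  · have hsw : u ≤ a + s * w := by nlinarith
    rw [max_eq_left (hlu.trans hsw), max_eq_left (hlu.trans hup), min_eq_right hsw,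
      min_eq_right hup, abs_of_nonneg (sub_nonneg.2 hau)]
    nlinarith
  · have hclamp_a : min (max a l) u = a := by rw [max_eq_left hla, min_eq_left hau]
    rw [max_eq_left hlow.le, min_eq_left hup.le, add_sub_cancel_left]
    calc |min (max (a + s * w) l) u - a| = |min (max (a + s * w) l) u - min (max a l) u| := by
          rw [hclamp_a]
      _ ≤ |a + s * w - a| := abs_clamp_sub_clamp_le _ _ _ _
      _ = s * |w| := by rw [add_sub_cancel_left, abs_mul, abs_of_nonneg hs0]

theorem projected_gradient_descent_1d (g : ℝ → ℝ) (g' : ℝ → ℝ) (L : ℝ) (hL : 0 < L)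
    (hderiv : ∀ x, HasDerivAt g (g' x) x)
    (hlip : ∀ x y, |g' x - g' y| ≤ L * |x - y|)
    (a : ℝ) (ha : a ∈ Set.Icc (0 : ℝ) 1) :
    g (a + (min (max (a - g' a / L) 0) 1 - a))
      ≤ g a - L / 2 * (min (max (a - g' a / L) 0) 1 - a) ^ 2 ∧
    (1 ≤ L →
      g (a + (min (max (a - g' a / L) 0) 1 - a))
        ≤ g a - 1 / (2 * L) * (min (max (a - g' a) 0) 1 - a) ^ 2) := by
  set d := min (max (a - g' a / L) 0) 1 - a with hd
  have hstep : g' a * d ≤ -(L * d ^ 2) := by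
    have hvar : (g' a / L + d) * d ≤ 0 := by
      have := clamp_variational_ineq (x := a - g' a / L) ha
      rw [show min (max (a - g' a / L) 0) 1 = a + d by ring] at this
      linarith
    calc g' a * d = L * ((g' a / L + d) * d) - L * d ^ 2 := by field_simp; ring
      _ ≤ -(L * d ^ 2) := by linarith [mul_nonpos_of_nonneg_of_nonpos hL.le hvar]
  have hfirst : g (a + d) ≤ g a - L / 2 * d ^ 2 := by
    linarith [descent_lemma g g' L hderiv hlip a d]
  refine ⟨hfirst, fun hL1 => ?_⟩
  have hscale := abs_clamp_add_smul_sub_le (w := -(g' a / L)) ha hL1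
  rw [mul_neg, mul_div_cancel₀ _ hL.ne', ← sub_eq_add_neg, ← sub_eq_add_neg, ← hd] at hscale
  have hsq : (min (max (a - g' a) 0) 1 - a) ^ 2 ≤ L ^ 2 * d ^ 2 := by
    simpa [mul_pow] using pow_le_pow_left₀ (abs_nonneg _) hscale 2
  calc g (a + d) ≤ g a - L / 2 * d ^ 2 := hfirst
    _ = g a - 1 / (2 * L) * (L ^ 2 * d ^ 2) := by field_simp
    _ ≤ g a - 1 / (2 * L) * (min (max (a - g' a) 0) 1 - a) ^ 2 := by gcongr
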